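/- For every n ≥ 2, the number of Riordan partitions of the set {1,…,n} equals the Riordan number Rₙ. -/

import Mathlib

noncomputable section

-- `{1,…,n}` is modelled as `Fin n`.
def IsPartitionGe2 (n : ℕ) (P : Finset (Finset (Fin n))) : Prop :=
  (∀ i : Fin n, ∃! B, B ∈ P ∧ i ∈ B) ∧ (∀ B ∈ P, 2 ≤ B.card)

def IsNonCrossing (n : ℕ) (P : Finset (Finset (Fin n))) : Prop :=
  ¬ ∃ i j k l : Fin n, i < j ∧ j < k ∧ k < l ∧
      ∃ B ∈ P, ∃ C ∈ P, B ≠ C ∧ i ∈ B ∧ k ∈ B ∧ j ∈ C ∧ l ∈ C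

def IsRiordanPartition (n : ℕ) (P : Finset (Finset (Fin n))) : Prop :=
  IsPartitionGe2 n P ∧ IsNonCrossing n P

/-!
Being a Riordan partition only depends on the order type of the ground set, so the number of
Riordan partitions of a finite linearly ordered set `S` is `r #S` for a single sequence `r`.
Let `j` be the successor of `min S` in its block. The points of `S` strictly between `min S` and
`j` carry a Riordan partition of their own, and the remaining points carry one in which their two
least points `min S < j` share a block. Partitions of the latter kind of a `k`-element set are
counted by `r (k - 2) + r (k - 1)`: either `{min, j}` is a block, or erasing the least point leaves
a Riordan partition. Hence `r (n + 2) = ∑ i ≤ n, r i * (r (n - i) + r (n + 1 - i))`, that is, the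
generating function `A` satisfies `(1 + X) A = 1 + X (1 + X) A²`. Then `W = (1 + X) (1 - 2 X A)`
satisfies `W² = 1 - 2X - 3X²`, and differentiating gives the linear differential equation
`X (1 - 2X - 3X²) A' + (1 - 3X²) A = 1`, whose coefficients are the recurrence of the Riordan
numbers.
-/

open Finset

variable {α β : Type*} [LinearOrder α] [LinearOrder β]

/-! ### Crossing blocks -/

def Crosses (B C : Finset α) : Prop :=
  ∃ i j k l, i < j ∧ j < k ∧ k < l ∧ i ∈ B ∧ k ∈ B ∧ j ∈ C ∧ l ∈ C

theorem Crosses.mono {B C B' C' : Finset α} (h : Crosses B C) (hB : B ⊆ B') (hC : C ⊆ C') :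
    Crosses B' C' := by
  obtain ⟨i, j, k, l, hij, hjk, hkl, hi, hk, hj, hl⟩ := h
  exact ⟨i, j, k, l, hij, hjk, hkl, hB hi, hB hk, hC hj, hC hl⟩

@[simp]
theorem crosses_map_iff (f : α ↪o β) {B C : Finset α} :
    Crosses (B.map f.toEmbedding) (C.map f.toEmbedding) ↔ Crosses B C := by
  constructor
  · rintro ⟨_, _, _, _, hij, hjk, hkl, hi, hk, hj, hl⟩
    obtain ⟨i, hiB, rfl⟩ := mem_map.1 hi
    obtain ⟨k, hkB, rfl⟩ := mem_map.1 hk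
    obtain ⟨j, hjC, rfl⟩ := mem_map.1 hj
    obtain ⟨l, hlC, rfl⟩ := mem_map.1 hl
    exact ⟨i, j, k, l, f.lt_iff_lt.1 hij, f.lt_iff_lt.1 hjk, f.lt_iff_lt.1 hkl, hiB, hkB, hjC, hlC⟩
  · rintro ⟨i, j, k, l, hij, hjk, hkl, hi, hk, hj, hl⟩
    exact ⟨f i, f j, f k, f l, f.lt_iff_lt.2 hij, f.lt_iff_lt.2 hjk, f.lt_iff_lt.2 hkl,
      mem_map_of_mem _ hi, mem_map_of_mem _ hk, mem_map_of_mem _ hj, mem_map_of_mem _ hl⟩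

theorem not_crosses_of_forall_lt {B C : Finset α} (h : ∀ x ∈ B, ∀ y ∈ C, x < y) :
    ¬Crosses B C ∧ ¬Crosses C B := by
  constructor
  · rintro ⟨i, j, k, l, -, hjk, -, -, hk, hj, -⟩
    exact (h k hk j hj).not_gt hjk
  · rintro ⟨i, j, k, l, hij, -, -, hi, -, hj, -⟩
    exact (h j hj i hi).not_gt hij

theorem not_crosses_of_forall_mem_Ioo {B C : Finset α} {a b : α}
    (hB : ∀ x ∈ B, a < x ∧ x < b) (hC : ∀ y ∈ C, y ≤ a ∨ b ≤ y) :
    ¬Crosses B C ∧ ¬Crosses C B := by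
  constructor
  · rintro ⟨i, j, k, l, hij, hjk, -, hi, hk, hj, -⟩
    rcases hC j hj with h | h
    · exact (hB i hi).1.not_ge (hij.le.trans h)
    · exact (hB k hk).2.not_ge (h.trans hjk.le)
  · rintro ⟨i, j, k, l, hij, hjk, hkl, hi, hk, hj, hl⟩
    rcases hC k hk with h | h
    · exact (hB j hj).1.not_ge (hjk.le.trans h)
    · exact (hB l hl).2.not_ge (h.trans hkl.le)

/-! ### Riordan partitions of a finite subset of a linear order -/

structure IsRiordanOn (S : Finset α) (P : Finset (Finset α)) : Prop where
  subset : ∀ B ∈ P, B ⊆ S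
  exists_mem : ∀ x ∈ S, ∃ B ∈ P, x ∈ B
  eq_of_mem : ∀ x, ∀ B ∈ P, ∀ C ∈ P, x ∈ B → x ∈ C → B = C
  two_le_card : ∀ B ∈ P, 2 ≤ #B
  not_crosses : ∀ B ∈ P, ∀ C ∈ P, B ≠ C → ¬Crosses B C

namespace IsRiordanOn

variable {S T : Finset α} {P Q : Finset (Finset α)}

theorem nonempty (h : IsRiordanOn S P) {B : Finset α} (hB : B ∈ P) : B.Nonempty :=
  card_pos.1 (by have := h.two_le_card B hB; omega)

theorem of_subset (h : IsRiordanOn S P) (hQP : Q ⊆ P) (hsub : ∀ B ∈ Q, B ⊆ T)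
    (hex : ∀ x ∈ T, ∃ B ∈ Q, x ∈ B) : IsRiordanOn T Q where
  subset := hsub
  exists_mem := hex
  eq_of_mem x B hB C hC := h.eq_of_mem x B (hQP hB) C (hQP hC)
  two_le_card B hB := h.two_le_card B (hQP hB)
  not_crosses B hB C hC := h.not_crosses B (hQP hB) C (hQP hC)

theorem filter (h : IsRiordanOn S P) (p : α → Prop) [DecidablePred p]
    (hp : ∀ B ∈ P, ∀ x ∈ B, ∀ y ∈ B, p x → p y) :
    IsRiordanOn {x ∈ S | p x} {B ∈ P | ∀ x ∈ B, p x} := by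
  refine h.of_subset (filter_subset _ _) (fun B hB x hx => ?_) (fun x hx => ?_)
  · rw [mem_filter] at hB ⊢
    exact ⟨h.subset B hB.1 hx, hB.2 x hx⟩
  · rw [mem_filter] at hx
    obtain ⟨B, hB, hxB⟩ := h.exists_mem x hx.1
    exact ⟨B, mem_filter.2 ⟨hB, fun y hy => hp B hB x hxB y hy hx.2⟩, hxB⟩

theorem erase (h : IsRiordanOn S P) {B : Finset α} (hB : B ∈ P) :
    IsRiordanOn (S \ B) (P.erase B) := by
  refine h.of_subset (erase_subset _ _) (fun C hC x hx => ?_) (fun x hx => ?_)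
  · obtain ⟨hCB, hC⟩ := mem_erase.1 hC
    exact mem_sdiff.2 ⟨h.subset C hC hx, fun hxB => hCB (h.eq_of_mem x C hC B hB hx hxB)⟩
  · obtain ⟨hxS, hxB⟩ := mem_sdiff.1 hx
    obtain ⟨C, hC, hxC⟩ := h.exists_mem x hxS
    exact ⟨C, mem_erase.2 ⟨fun hCB => hxB (hCB ▸ hxC), hC⟩, hxC⟩

theorem union (hP : IsRiordanOn S P) (hQ : IsRiordanOn T Q) (hST : Disjoint S T)
    (hPQ : ∀ B ∈ P, ∀ C ∈ Q, ¬Crosses B C ∧ ¬Crosses C B) :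
    IsRiordanOn (S ∪ T) (P ∪ Q) where
  subset B hB := by
    rcases mem_union.1 hB with hB | hB
    · exact (hP.subset B hB).trans subset_union_left
    · exact (hQ.subset B hB).trans subset_union_right
  exists_mem x hx := by
    rcases mem_union.1 hx with hx | hx
    · obtain ⟨B, hB, hxB⟩ := hP.exists_mem x hx
      exact ⟨B, mem_union_left _ hB, hxB⟩
    · obtain ⟨B, hB, hxB⟩ := hQ.exists_mem x hx
      exact ⟨B, mem_union_right _ hB, hxB⟩
  eq_of_mem x B hB C hC hxB hxC := by
    rcases mem_union.1 hB with hB | hB <;> rcases mem_union.1 hC with hC | hC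
    · exact hP.eq_of_mem x B hB C hC hxB hxC
    · exact absurd (hQ.subset C hC hxC) (disjoint_left.1 hST (hP.subset B hB hxB))
    · exact absurd (hQ.subset B hB hxB) (disjoint_left.1 hST (hP.subset C hC hxC))
    · exact hQ.eq_of_mem x B hB C hC hxB hxC
  two_le_card B hB := by
    rcases mem_union.1 hB with hB | hB
    · exact hP.two_le_card B hB
    · exact hQ.two_le_card B hB
  not_crosses B hB C hC hBC := by
    rcases mem_union.1 hB with hB | hB <;> rcases mem_union.1 hC with hC | hC
    · exact hP.not_crosses B hB C hC hBC
    · exact (hPQ B hB C hC).1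
    · exact (hPQ C hC B hB).2
    · exact hQ.not_crosses B hB C hC hBC

theorem image_erase (h : IsRiordanOn S P) {a : α} (ha : ∀ B ∈ P, a ∈ B → 3 ≤ #B) :
    IsRiordanOn (S.erase a) (P.image (·.erase a)) where
  subset := by
    simp only [forall_mem_image]
    exact fun B hB => erase_subset_erase a (h.subset B hB)
  exists_mem x hx := by
    obtain ⟨hxa, hxS⟩ := mem_erase.1 hx
    obtain ⟨B, hB, hxB⟩ := h.exists_mem x hxS
    exact ⟨B.erase a, mem_image_of_mem _ hB, mem_erase.2 ⟨hxa, hxB⟩⟩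
  eq_of_mem x := by
    simp only [forall_mem_image]
    intro B hB C hC hxB hxC
    rw [h.eq_of_mem x B hB C hC (mem_of_mem_erase hxB) (mem_of_mem_erase hxC)]
  two_le_card := by
    simp only [forall_mem_image]
    intro B hB
    by_cases haB : a ∈ B
    · have := ha B hB haB
      rw [card_erase_of_mem haB]
      omega
    · rw [erase_eq_of_notMem haB]
      exact h.two_le_card B hB
  not_crosses := by
    simp only [forall_mem_image]
    intro B hB C hC hBC hcross
    exact h.not_crosses B hB C hC (fun h => hBC (h ▸ rfl))
      (hcross.mono (erase_subset a B) (erase_subset a C))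

end IsRiordanOn

theorem isRiordanOn_singleton {B : Finset α} (hB : 2 ≤ #B) : IsRiordanOn B {B} where
  subset _ hC := (mem_singleton.1 hC).le
  exists_mem _ hx := ⟨B, mem_singleton_self B, hx⟩
  eq_of_mem _ _ hC _ hD _ _ := (mem_singleton.1 hC).trans (mem_singleton.1 hD).symm
  two_le_card _ hC := mem_singleton.1 hC ▸ hB
  not_crosses _ hC _ hD hCD := absurd ((mem_singleton.1 hC).trans (mem_singleton.1 hD).symm) hCD

def insertIfMem (a b : α) (B : Finset α) : Finset α := if b ∈ B then insert a B else B

theorem mem_insertIfMem {a b x : α} {B : Finset α} :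
    x ∈ insertIfMem a b B ↔ x ∈ B ∨ x = a ∧ b ∈ B := by
  unfold insertIfMem
  split_ifs with hb <;> simp [hb, or_comm]

theorem subset_insertIfMem (a b : α) (B : Finset α) : B ⊆ insertIfMem a b B :=
  fun _ hx => mem_insertIfMem.2 (Or.inl hx)

theorem erase_insertIfMem {a b : α} {B : Finset α} (ha : a ∉ B) :
    (insertIfMem a b B).erase a = B := by
  unfold insertIfMem
  split_ifs
  · exact erase_insert ha
  · exact erase_eq_of_notMem ha

theorem insertIfMem_erase {a b : α} {B : Finset α} (hab : a ≠ b) (h : a ∈ B ↔ b ∈ B) :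
    insertIfMem a b (B.erase a) = B := by
  unfold insertIfMem
  by_cases haB : a ∈ B
  · rw [if_pos (mem_erase.2 ⟨hab.symm, h.1 haB⟩), insert_erase haB]
  · rw [erase_eq_of_notMem haB, if_neg (mt h.2 haB)]

theorem IsRiordanOn.crosses_of_crosses_insertIfMem {S : Finset α} {Q : Finset (Finset α)}
    (h : IsRiordanOn S Q) {a b : α} (hab : a < b) (hS : ∀ x ∈ S, b ≤ x) {B C : Finset α}
    (hB : B ∈ Q) (hC : C ∈ Q) (hBC : B ≠ C)
    (hcross : Crosses (insertIfMem a b B) (insertIfMem a b C)) : Crosses B C := by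
  obtain ⟨i, j, k, l, hij, hjk, hkl, hi, hk, hj, hl⟩ := hcross
  have hlt : ∀ D ∈ Q, ∀ y ∈ insertIfMem a b D, i < y → y ∈ D := by
    intro D hD y hy hiy
    rcases mem_insertIfMem.1 hy with hy | ⟨rfl, -⟩
    · exact hy
    · rcases mem_insertIfMem.1 hi with hi | ⟨rfl, -⟩
      · exact absurd ((hab.trans_le (hS i (h.subset B hB hi))).trans hiy) (lt_irrefl _)
      · exact absurd hiy (lt_irrefl _)
  have hjC := hlt C hC j hj hij
  have hkB := hlt B hB k hk (hij.trans hjk)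
  have hlC := hlt C hC l hl (hij.trans (hjk.trans hkl))
  rcases mem_insertIfMem.1 hi with hiB | ⟨rfl, hbB⟩
  · exact ⟨i, j, k, l, hij, hjk, hkl, hiB, hkB, hjC, hlC⟩
  · have hbj : b < j := lt_of_le_of_ne (hS j (h.subset C hC hjC))
      fun hbj => hBC (h.eq_of_mem b B hB C hC hbB (hbj ▸ hjC))
    exact ⟨b, j, k, l, hbj, hjk, hkl, hbB, hkB, hjC, hlC⟩

theorem IsRiordanOn.pair_notMem_image_insertIfMem {S : Finset α} {Q : Finset (Finset α)}
    (h : IsRiordanOn S Q) {a b : α} (ha : a ∉ S) : {a, b} ∉ Q.image (insertIfMem a b) := by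
  intro hmem
  obtain ⟨C, hC, hCab⟩ := mem_image.1 hmem
  have hCb : C ⊆ {b} := fun x hx => by
    have hx' := hCab ▸ subset_insertIfMem a b C hx
    have hxa : x ≠ a := fun hxa => ha (hxa ▸ h.subset C hC hx)
    simpa [hxa] using hx'
  have := (h.two_le_card C hC).trans (card_le_card hCb)
  simp at this

theorem IsRiordanOn.image_insertIfMem {S : Finset α} {Q : Finset (Finset α)}
    (h : IsRiordanOn S Q) {a b : α} (hb : b ∈ S) (hab : a < b) (hS : ∀ x ∈ S, b ≤ x) :
    IsRiordanOn (insert a S) (Q.image (insertIfMem a b)) where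
  subset := by
    simp only [forall_mem_image]
    intro B hB x hx
    rcases mem_insertIfMem.1 hx with hx | ⟨rfl, -⟩
    · exact mem_insert_of_mem (h.subset B hB hx)
    · exact mem_insert_self _ _
  exists_mem x hx := by
    rcases mem_insert.1 hx with rfl | hx
    · obtain ⟨B, hB, hbB⟩ := h.exists_mem b hb
      exact ⟨_, mem_image_of_mem _ hB, mem_insertIfMem.2 (Or.inr ⟨rfl, hbB⟩)⟩
    · obtain ⟨B, hB, hxB⟩ := h.exists_mem x hx
      exact ⟨_, mem_image_of_mem _ hB, subset_insertIfMem a b B hxB⟩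
  eq_of_mem x := by
    simp only [forall_mem_image]
    intro B hB C hC hxB hxC
    have haS : a ∉ S := fun haS => (hS a haS).not_gt hab
    rcases mem_insertIfMem.1 hxB with hxB | ⟨rfl, hbB⟩ <;>
      rcases mem_insertIfMem.1 hxC with hxC | ⟨hxa, hbC⟩
    · rw [h.eq_of_mem x B hB C hC hxB hxC]
    · exact absurd (hxa ▸ h.subset B hB hxB) haS
    · exact absurd (h.subset C hC hxC) haS
    · rw [h.eq_of_mem b B hB C hC hbB hbC]
  two_le_card := by
    simp only [forall_mem_image]
    exact fun B hB => (h.two_le_card B hB).trans (card_le_card (subset_insertIfMem a b B))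
  not_crosses := by
    simp only [forall_mem_image]
    intro B hB C hC hBC hcross
    have hBC' : B ≠ C := fun h => hBC (h ▸ rfl)
    exact h.not_crosses B hB C hC hBC' (h.crosses_of_crosses_insertIfMem hab hS hB hC hBC' hcross)

open Classical in
def riordanPartitions (S : Finset α) : Finset (Finset (Finset α)) :=
  {P ∈ S.powerset.powerset | IsRiordanOn S P}

theorem mem_riordanPartitions {S : Finset α} {P : Finset (Finset α)} :
    P ∈ riordanPartitions S ↔ IsRiordanOn S P := by
  classical
  simp only [riordanPartitions, mem_filter, mem_powerset, and_iff_right_iff_imp]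
  exact fun h B hB => mem_powerset.2 (h.subset B hB)

theorem riordanPartitions_empty : riordanPartitions (∅ : Finset α) = {∅} := by
  ext P
  rw [mem_riordanPartitions, mem_singleton]
  constructor
  · intro h
    refine eq_empty_of_forall_notMem fun B hB => ?_
    obtain ⟨x, hx⟩ := h.nonempty hB
    exact notMem_empty x (h.subset B hB hx)
  · rintro rfl
    exact ⟨by simp, by simp, by simp, by simp, by simp⟩

theorem riordanPartitions_singleton (a : α) : riordanPartitions {a} = ∅ := by
  refine eq_empty_of_forall_notMem fun P hP => ?_
  have h := mem_riordanPartitions.1 hP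
  obtain ⟨B, hB, -⟩ := h.exists_mem a (mem_singleton_self a)
  have := (h.two_le_card B hB).trans (card_le_card (h.subset B hB))
  simp at this

theorem isRiordanOn_map_iff (f : α ↪o β) {S : Finset α} {P : Finset (Finset α)} :
    IsRiordanOn (S.map f.toEmbedding) (P.map (mapEmbedding f.toEmbedding).toEmbedding) ↔
      IsRiordanOn S P := by
  set F := (mapEmbedding f.toEmbedding).toEmbedding
  have hF (B : Finset α) : F B = B.map f.toEmbedding := rfl
  have hmem (x : α) (B : Finset α) : f x ∈ F B ↔ x ∈ B := mem_map' f.toEmbedding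
  constructor
  · intro h
    refine ⟨fun B hB => ?_, fun x hx => ?_, fun x B hB C hC hxB hxC => ?_, fun B hB => ?_,
      fun B hB C hC hBC => ?_⟩
    · exact map_subset_map.1 (h.subset _ (mem_map_of_mem F hB))
    · obtain ⟨_, hB', hxB⟩ := h.exists_mem (f x) (mem_map_of_mem _ hx)
      obtain ⟨B, hB, rfl⟩ := mem_map.1 hB'
      exact ⟨B, hB, (hmem x B).1 hxB⟩
    · exact F.injective (h.eq_of_mem (f x) _ (mem_map_of_mem F hB) _ (mem_map_of_mem F hC)
        ((hmem x B).2 hxB) ((hmem x C).2 hxC))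
    · simpa [hF] using h.two_le_card _ (mem_map_of_mem F hB)
    · simpa [hF] using h.not_crosses _ (mem_map_of_mem F hB) _ (mem_map_of_mem F hC)
        (F.injective.ne hBC)
  · intro h
    refine ⟨?_, ?_, fun y => ?_, ?_, ?_⟩
    · simpa [forall_mem_map, hF] using h.subset
    · simp only [forall_mem_map]
      intro x hx
      obtain ⟨B, hB, hxB⟩ := h.exists_mem x hx
      exact ⟨F B, mem_map_of_mem F hB, (hmem x B).2 hxB⟩
    · simp only [forall_mem_map]
      intro B hB C hC hyB hyC
      obtain ⟨x, hxB, rfl⟩ := mem_map.1 hyB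
      rw [h.eq_of_mem x B hB C hC hxB ((hmem x C).1 hyC)]
    · simpa [forall_mem_map, hF] using h.two_le_card
    · simpa [forall_mem_map, hF] using h.not_crosses

theorem card_riordanPartitions_map (f : α ↪o β) (S : Finset α) :
    #(riordanPartitions (S.map f.toEmbedding)) = #(riordanPartitions S) := by
  set F := (mapEmbedding f.toEmbedding).toEmbedding
  suffices riordanPartitions (S.map f.toEmbedding) =
      (riordanPartitions S).map (mapEmbedding F).toEmbedding by
    rw [this, card_map]
  ext Q
  simp only [mem_map, mem_riordanPartitions]
  constructor
  · intro hQ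
    obtain ⟨P, -, rfl⟩ : ∃ P ⊆ S.powerset, Q = P.map F := by
      refine subset_map_iff.1 fun B hB => ?_
      obtain ⟨B, hBS, rfl⟩ := subset_map_iff.1 (hQ.subset B hB)
      exact mem_map_of_mem F (mem_powerset.2 hBS)
    exact ⟨P, (isRiordanOn_map_iff f).1 hQ, rfl⟩
  · rintro ⟨P, hP, rfl⟩
    exact (isRiordanOn_map_iff f).2 hP

def riordanCount (n : ℕ) : ℕ := #(riordanPartitions (univ : Finset (Fin n)))

theorem card_riordanPartitions (S : Finset α) : #(riordanPartitions S) = riordanCount #S := by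
  rw [riordanCount, ← card_riordanPartitions_map (S.orderEmbOfFin rfl), map_orderEmbOfFin_univ]

/-! ### Partitions in which the two least points share a block -/

section TwoLeast

variable {T : Finset α} {a b : α}

theorem card_filter_pair_mem (ha : a ∈ T) (hb : b ∈ T) (hab : a < b)
    (hT : ∀ x ∈ T, x ≠ a → b ≤ x) :
    #{P ∈ riordanPartitions T | {a, b} ∈ P} = #(riordanPartitions (T \ {a, b})) := by
  have hpair : ({a, b} : Finset α) ⊆ T := insert_subset ha (singleton_subset_iff.2 hb)
  apply card_nbij' (fun P => P.erase {a, b}) (fun Q => insert {a, b} Q)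
  · intro P hP
    obtain ⟨hP, hab⟩ := mem_filter.1 hP
    exact mem_riordanPartitions.2 ((mem_riordanPartitions.1 hP).erase hab)
  · intro Q hQ
    have hQ := mem_riordanPartitions.1 hQ
    refine mem_filter.2 ⟨mem_riordanPartitions.2 ?_, mem_insert_self _ _⟩
    rw [insert_eq, ← union_sdiff_of_subset hpair]
    refine (isRiordanOn_singleton (card_pair hab.ne).ge).union hQ disjoint_sdiff
      fun B hB C hC => not_crosses_of_forall_lt fun x hx y hy => ?_
    obtain ⟨hyT, hyab⟩ := mem_sdiff.1 (hQ.subset C hC hy)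
    simp only [mem_insert, mem_singleton, not_or] at hyab
    have hby := lt_of_le_of_ne (hT y hyT hyab.1) (Ne.symm hyab.2)
    rw [mem_singleton.1 hB, mem_insert, mem_singleton] at hx
    rcases hx with rfl | rfl
    · exact hab.trans hby
    · exact hby
  · intro P hP
    exact insert_erase (mem_filter.1 hP).2
  · intro Q hQ
    refine erase_insert fun hmem => ?_
    have := (mem_riordanPartitions.1 hQ).subset _ hmem (mem_insert_self a {b})
    simp at this

theorem card_filter_pair_notMem (ha : a ∈ T) (hb : b ∈ T) (hab : a < b)
    (hT : ∀ x ∈ T, x ≠ a → b ≤ x) :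
    #{P ∈ riordanPartitions T | (∃ B ∈ P, a ∈ B ∧ b ∈ B) ∧ {a, b} ∉ P} =
      #(riordanPartitions (T.erase a)) := by
  have hbT : b ∈ T.erase a := mem_erase.2 ⟨hab.ne', hb⟩
  apply card_nbij' (fun P => P.image (·.erase a)) (fun Q => Q.image (insertIfMem a b))
  · intro P hP
    obtain ⟨hP, ⟨B₀, hB₀, haB₀, hbB₀⟩, hpair⟩ := mem_filter.1 hP
    have hP := mem_riordanPartitions.1 hP
    refine mem_riordanPartitions.2 (hP.image_erase fun B hB haB => ?_)
    obtain rfl := hP.eq_of_mem a B hB B₀ hB₀ haB haB₀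
    have hssub : {a, b} ⊂ B := ssubset_of_subset_of_ne
      (insert_subset haB (singleton_subset_iff.2 hbB₀)) fun h => hpair (h ▸ hB)
    have := card_lt_card hssub
    rw [card_pair hab.ne] at this
    omega
  · intro Q hQ
    have hQ := mem_riordanPartitions.1 hQ
    have hQ' := hQ.image_insertIfMem hbT hab fun x hx =>
      hT x (mem_of_mem_erase hx) (ne_of_mem_erase hx)
    rw [insert_erase ha] at hQ'
    obtain ⟨B, hB, hbB⟩ := hQ.exists_mem b hbT
    exact mem_filter.2 ⟨mem_riordanPartitions.2 hQ', ⟨_, mem_image_of_mem _ hB,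
      mem_insertIfMem.2 (Or.inr ⟨rfl, hbB⟩), subset_insertIfMem a b B hbB⟩,
      hQ.pair_notMem_image_insertIfMem fun haT => (mem_erase.1 haT).1 rfl⟩
  · intro P hP
    obtain ⟨hP, ⟨B₀, hB₀, haB₀, hbB₀⟩, -⟩ := mem_filter.1 hP
    have hP := mem_riordanPartitions.1 hP
    simp only [image_image]
    refine (image_congr fun B hB => insertIfMem_erase hab.ne ⟨fun haB => ?_, fun hbB => ?_⟩).trans
      image_id
    · exact hP.eq_of_mem a B₀ hB₀ B hB haB₀ haB ▸ hbB₀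
    · exact hP.eq_of_mem b B₀ hB₀ B hB hbB₀ hbB ▸ haB₀
  · intro Q hQ
    have hQ := mem_riordanPartitions.1 hQ
    simp only [image_image]
    refine (image_congr fun B hB => ?_).trans image_id
    exact erase_insertIfMem fun haB => (mem_erase.1 (hQ.subset B hB haB)).1 rfl

theorem card_filter_exists_mem_pair (ha : a ∈ T) (hb : b ∈ T) (hab : a < b)
    (hT : ∀ x ∈ T, x ≠ a → b ≤ x) :
    #{P ∈ riordanPartitions T | ∃ B ∈ P, a ∈ B ∧ b ∈ B} =
      riordanCount (#T - 2) + riordanCount (#T - 1) := by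
  have hpair : ({a, b} : Finset α) ⊆ T := insert_subset ha (singleton_subset_iff.2 hb)
  rw [← card_filter_add_card_filter_not (p := fun P => {a, b} ∈ P), filter_filter, filter_filter]
  have hsame : {P ∈ riordanPartitions T | (∃ B ∈ P, a ∈ B ∧ b ∈ B) ∧ {a, b} ∈ P} =
      {P ∈ riordanPartitions T | {a, b} ∈ P} :=
    filter_congr fun P _ => and_iff_right_of_imp fun h => ⟨_, h, by simp, by simp⟩
  rw [hsame, card_filter_pair_mem ha hb hab hT, card_filter_pair_notMem ha hb hab hT,
    card_riordanPartitions, card_riordanPartitions, card_sdiff_of_subset hpair,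
    card_pair hab.ne, card_erase_of_mem ha]

end TwoLeast

/-! ### Splitting at the successor of the least point in its block -/

theorem filter_forall_union {p : α → Prop} [DecidablePred p] {Q R : Finset (Finset α)}
    (hQ : ∀ B ∈ Q, ∀ x ∈ B, p x) (hR : ∀ B ∈ R, ∃ x ∈ B, ¬p x) :
    {B ∈ Q ∪ R | ∀ x ∈ B, p x} = Q := by
  rw [filter_union, filter_true_of_mem hQ, filter_false_of_mem, union_empty]
  intro B hB hBp
  obtain ⟨x, hx, hpx⟩ := hR B hB
  exact hpx (hBp x hx)

theorem filter_forall_union_filter_forall_not {p : α → Prop} [DecidablePred p]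
    {P : Finset (Finset α)} (hP : ∀ B ∈ P, B.Nonempty)
    (hp : ∀ B ∈ P, ∀ x ∈ B, ∀ y ∈ B, p x → p y) :
    {B ∈ P | ∀ x ∈ B, p x} ∪ {B ∈ P | ∀ x ∈ B, ¬p x} = P := by
  ext B
  simp only [mem_union, mem_filter]
  refine ⟨fun h => h.elim And.left And.left, fun hB => ?_⟩
  obtain ⟨x, hx⟩ := hP B hB
  by_cases hpx : p x
  · exact Or.inl ⟨hB, fun y hy => hp B hB x hx y hy hpx⟩
  · exact Or.inr ⟨hB, fun y hy hpy => hpx (hp B hB y hy x hx hpy)⟩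

section BlockSucc

variable {S : Finset α} {P Q R : Finset (Finset α)} {a j : α}

def IsBlockSucc (P : Finset (Finset α)) (a j : α) : Prop :=
  ∃ B ∈ P, a ∈ B ∧ j ∈ B ∧ a < j ∧ ∀ x ∈ B, a < x → j ≤ x

theorem IsRiordanOn.exists_isBlockSucc (h : IsRiordanOn S P) (ha : a ∈ S)
    (hmin : ∀ x ∈ S, a ≤ x) : ∃ j, IsBlockSucc P a j := by
  obtain ⟨B, hB, haB⟩ := h.exists_mem a ha
  have hne : {x ∈ B | a < x}.Nonempty := by
    obtain ⟨x, hxB, hxa⟩ := exists_mem_ne (h.two_le_card B hB) a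
    exact ⟨x, mem_filter.2 ⟨hxB, lt_of_le_of_ne (hmin x (h.subset B hB hxB)) hxa.symm⟩⟩
  obtain ⟨hjB, haj⟩ := mem_filter.1 (min'_mem _ hne)
  exact ⟨_, B, hB, haB, hjB, haj, fun x hx hax => min'_le _ _ (mem_filter.2 ⟨hx, hax⟩)⟩

theorem IsRiordanOn.eq_of_isBlockSucc (h : IsRiordanOn S P) {j' : α} (hj : IsBlockSucc P a j)
    (hj' : IsBlockSucc P a j') : j = j' := by
  obtain ⟨B, hB, haB, hjB, haj, hBj⟩ := hj
  obtain ⟨B', hB', haB', hjB', haj', hBj'⟩ := hj'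
  obtain rfl := h.eq_of_mem a B hB B' hB' haB haB'
  exact le_antisymm (hBj j' hjB' haj') (hBj' j hjB haj)

open Classical in
theorem card_riordanPartitions_eq_sum (ha : a ∈ S) (hmin : ∀ x ∈ S, a ≤ x) :
    #(riordanPartitions S) =
      ∑ j ∈ S with a < j, #{P ∈ riordanPartitions S | IsBlockSucc P a j} := by
  rw [← card_biUnion]
  · congr 1
    ext P
    simp only [mem_biUnion, mem_filter]
    refine ⟨fun hP => ?_, fun ⟨_, _, hP, _⟩ => hP⟩
    obtain ⟨j, hj⟩ := (mem_riordanPartitions.1 hP).exists_isBlockSucc ha hmin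
    obtain ⟨B, hB, -, hjB, haj, -⟩ := id hj
    exact ⟨j, ⟨(mem_riordanPartitions.1 hP).subset B hB hjB, haj⟩, hP, hj⟩
  · intro j _ j' _ hjj'
    refine disjoint_left.2 fun P hP hP' => hjj' ?_
    obtain ⟨hP, hj⟩ := mem_filter.1 hP
    exact (mem_riordanPartitions.1 hP).eq_of_isBlockSucc hj (mem_filter.1 hP').2

/-- A block meeting both `(a, j)` and its complement would cross the block of `a` and `j`. -/
theorem IsRiordanOn.mem_Ioo_of_isBlockSucc (h : IsRiordanOn S P) (hmin : ∀ x ∈ S, a ≤ x)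
    (hj : IsBlockSucc P a j) :
    ∀ B ∈ P, ∀ x ∈ B, ∀ y ∈ B, a < x ∧ x < j → a < y ∧ y < j := by
  intro B hB x hx y hy hxaj
  obtain ⟨B₀, hB₀, haB₀, hjB₀, -, hB₀j⟩ := hj
  have hBB₀ : B ≠ B₀ := by
    rintro rfl
    exact (hB₀j x hx hxaj.1).not_gt hxaj.2
  by_contra hyaj
  have hay : a < y := lt_of_le_of_ne (hmin y (h.subset B hB hy))
    fun hay => hBB₀ (h.eq_of_mem a B hB B₀ hB₀ (hay ▸ hy) haB₀)
  have hjy : j < y := lt_of_le_of_ne (not_lt.1 fun hyj => hyaj ⟨hay, hyj⟩)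
    fun hjy => hBB₀ (h.eq_of_mem j B hB B₀ hB₀ (hjy ▸ hy) hjB₀)
  exact h.not_crosses B₀ hB₀ B hB hBB₀.symm ⟨a, x, j, y, hxaj.1, hxaj.2, hjy, haB₀, hjB₀, hx, hy⟩

theorem IsRiordanOn.filter_of_isBlockSucc (h : IsRiordanOn S P) (hmin : ∀ x ∈ S, a ≤ x)
    (hj : IsBlockSucc P a j) :
    IsRiordanOn {x ∈ S | a < x ∧ x < j} {B ∈ P | ∀ x ∈ B, a < x ∧ x < j} ∧
      IsRiordanOn {x ∈ S | ¬(a < x ∧ x < j)} {B ∈ P | ∀ x ∈ B, ¬(a < x ∧ x < j)} ∧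
        ∃ B ∈ {B ∈ P | ∀ x ∈ B, ¬(a < x ∧ x < j)}, a ∈ B ∧ j ∈ B := by
  have hsplit := h.mem_Ioo_of_isBlockSucc hmin hj
  obtain ⟨B₀, hB₀, haB₀, hjB₀, -, hB₀j⟩ := hj
  refine ⟨h.filter _ hsplit,
    h.filter _ fun B hB x hx y hy hx' hy' => hx' (hsplit B hB y hy x hx hy'),
    B₀, mem_filter.2 ⟨hB₀, fun x hx hx' => (hB₀j x hx hx'.1).not_gt hx'.2⟩, haB₀, hjB₀⟩

theorem IsRiordanOn.union_of_isBlockSucc (haj : a < j)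
    (hQ : IsRiordanOn {x ∈ S | a < x ∧ x < j} Q) (hR : IsRiordanOn {x ∈ S | ¬(a < x ∧ x < j)} R)
    (hajR : ∃ B ∈ R, a ∈ B ∧ j ∈ B) : IsRiordanOn S (Q ∪ R) ∧ IsBlockSucc (Q ∪ R) a j := by
  have hout : ∀ B ∈ R, ∀ y ∈ B, y ≤ a ∨ j ≤ y := fun B hB y hy => by
    rcases not_and_or.1 (mem_filter.1 (hR.subset B hB hy)).2 with hay | hyj
    · exact Or.inl (not_lt.1 hay)
    · exact Or.inr (not_lt.1 hyj)
  have hunion := hQ.union hR (disjoint_filter_filter_not S S _) fun B hB C hC =>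
    not_crosses_of_forall_mem_Ioo (fun x hx => (mem_filter.1 (hQ.subset B hB hx)).2) (hout C hC)
  rw [filter_union_filter_not_eq] at hunion
  obtain ⟨B, hB, haB, hjB⟩ := hajR
  exact ⟨hunion, B, mem_union_right _ hB, haB, hjB, haj,
    fun x hx hax => (hout B hB x hx).resolve_left hax.not_ge⟩

open Classical in
theorem card_filter_isBlockSucc (hmin : ∀ x ∈ S, a ≤ x) (haj : a < j) :
    #{P ∈ riordanPartitions S | IsBlockSucc P a j} =
      #(riordanPartitions {x ∈ S | a < x ∧ x < j}) *
        #{R ∈ riordanPartitions {x ∈ S | ¬(a < x ∧ x < j)} | ∃ B ∈ R, a ∈ B ∧ j ∈ B} := by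
  rw [← card_product]
  apply card_nbij' (fun P => (P.filter fun B => ∀ x ∈ B, a < x ∧ x < j,
      P.filter fun B => ∀ x ∈ B, ¬(a < x ∧ x < j))) (fun QR => QR.1 ∪ QR.2)
  · intro P hP
    obtain ⟨hP, hj⟩ := mem_filter.1 hP
    obtain ⟨hin, hout, hajR⟩ := (mem_riordanPartitions.1 hP).filter_of_isBlockSucc hmin hj
    exact mem_product.2 ⟨mem_riordanPartitions.2 hin,
      mem_filter.2 ⟨mem_riordanPartitions.2 hout, hajR⟩⟩
  · rintro ⟨Q, R⟩ hQR
    obtain ⟨hQ, hR⟩ := mem_product.1 hQR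
    obtain ⟨hR, hajR⟩ := mem_filter.1 hR
    obtain ⟨hQR, hj⟩ := IsRiordanOn.union_of_isBlockSucc haj
      (mem_riordanPartitions.1 hQ) (mem_riordanPartitions.1 hR) hajR
    exact mem_filter.2 ⟨mem_riordanPartitions.2 hQR, hj⟩
  · intro P hP
    obtain ⟨hP, hj⟩ := mem_filter.1 hP
    have hP := mem_riordanPartitions.1 hP
    exact filter_forall_union_filter_forall_not (fun B hB => hP.nonempty hB)
      (hP.mem_Ioo_of_isBlockSucc hmin hj)
  · rintro ⟨Q, R⟩ hQR
    obtain ⟨hQ, hR⟩ := mem_product.1 hQR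
    have hQ := mem_riordanPartitions.1 hQ
    have hR := mem_riordanPartitions.1 (mem_filter.1 hR).1
    have hQin (B) (hB : B ∈ Q) (x) (hx : x ∈ B) : a < x ∧ x < j :=
      (mem_filter.1 (hQ.subset B hB hx)).2
    have hRout (B) (hB : B ∈ R) (x) (hx : x ∈ B) : ¬(a < x ∧ x < j) :=
      (mem_filter.1 (hR.subset B hB hx)).2
    refine Prod.ext (filter_forall_union hQin fun B hB => ?_) ?_
    · obtain ⟨x, hx⟩ := hR.nonempty hB
      exact ⟨x, hx, hRout B hB x hx⟩
    · show {B ∈ Q ∪ R | ∀ x ∈ B, ¬(a < x ∧ x < j)} = R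
      rw [union_comm]
      refine filter_forall_union hRout fun B hB => ?_
      obtain ⟨x, hx⟩ := hQ.nonempty hB
      exact ⟨x, hx, not_not.2 (hQin B hB x hx)⟩

end BlockSucc

theorem riordanCount_add_two (n : ℕ) :
    riordanCount (n + 2) =
      ∑ i ∈ range (n + 1), riordanCount i * (riordanCount (n - i) + riordanCount (n + 1 - i)) := by
  classical
  have hmin : ∀ x ∈ range (n + 2), 0 ≤ x := fun x _ => Nat.zero_le x
  rw [← card_range (n + 2), ← card_riordanPartitions,
    card_riordanPartitions_eq_sum (mem_range.2 (by omega)) hmin, sum_filter, sum_range_succ']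
  simp only [Nat.succ_pos, if_true, lt_irrefl, if_false, add_zero]
  refine sum_congr rfl fun i hi => ?_
  have hi := mem_range.1 hi
  have hinner : {x ∈ range (n + 2) | 0 < x ∧ x < i + 1} = Ioo 0 (i + 1) := by
    ext x
    simp only [mem_filter, mem_range, mem_Ioo]
    omega
  have houter : #{x ∈ range (n + 2) | ¬(0 < x ∧ x < i + 1)} = n + 2 - i := by
    have := card_filter_add_card_filter_not (s := range (n + 2)) (fun x => 0 < x ∧ x < i + 1)
    rw [hinner, Nat.card_Ioo, card_range] at this
    omega
  rw [card_filter_isBlockSucc hmin (by omega : 0 < i + 1), card_riordanPartitions, hinner,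
    Nat.card_Ioo, card_filter_exists_mem_pair (by simp) (by simp; omega) (by omega : 0 < i + 1)
      (fun x hx hx0 => by simp at hx; omega), houter,
    show n + 2 - i - 2 = n - i by omega, show n + 2 - i - 1 = n + 1 - i by omega,
    show i + 1 - 0 - 1 = i by omega]

/-! ### The generating function -/

namespace PowerSeries

theorem coeff_mk_sq {R : Type*} [CommSemiring R] (a : ℕ → R) (m : ℕ) :
    coeff m (mk a ^ 2) = ∑ i ∈ range (m + 1), a i * a (m - i) := by
  rw [sq, coeff_mul,
    Nat.sum_antidiagonal_eq_sum_range_succ (fun i j => coeff i (mk a) * coeff j (mk a))]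
  simp only [coeff_mk]

theorem one_add_X_mul_mk_of_convolution {R : Type*} [CommRing R] (a : ℕ → R)
    (h0 : a 0 = 1) (h1 : a 1 = 0)
    (h : ∀ n, a (n + 2) = ∑ i ∈ range (n + 1), a i * (a (n - i) + a (n + 1 - i))) :
    (1 + X) * mk a = 1 + X * (1 + X) * mk a ^ 2 := by
  have hl : (1 + X) * mk a = mk a + X * mk a := by ring
  have hr : 1 + X * (1 + X) * mk a ^ 2 = 1 + (X * mk a ^ 2 + X * (X * mk a ^ 2)) := by ring
  rw [hl, hr]
  ext (_ | _ | n)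
  · simp [h0]
  · simp [coeff_mk_sq, h0, h1]
  · simp only [map_add, coeff_mk, coeff_succ_X_mul, coeff_mk_sq, coeff_one, h,
      sum_range_succ _ (n + 1), Nat.sub_self, h0, mul_add, sum_add_distrib, Nat.add_eq_zero_iff,
      one_ne_zero, and_false, if_false, mul_one, zero_add]
    ring

variable {K : Type*} [Field K] [CharZero K]

theorem riordan_ode_of_quadratic {A : K⟦X⟧} (hA : (1 + X) * A = 1 + X * (1 + X) * A ^ 2) :
    X * (1 - 2 * X - 3 * X ^ 2) * d⁄dX K A + (1 - 3 * X ^ 2) * A = 1 := by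
  have h2 : d⁄dX K (2 : K⟦X⟧) = 0 := by simpa using (d⁄dX K).map_natCast 2
  have h3 : d⁄dX K (3 : K⟦X⟧) = 0 := by simpa using (d⁄dX K).map_natCast 3
  set W : K⟦X⟧ := (1 + X) * (1 - 2 * X * A)
  set W' : K⟦X⟧ := (1 + X) * (-2 * A - 2 * X * d⁄dX K A) + (1 - 2 * X * A)
  have hW : W ^ 2 = 1 - 2 * X - 3 * X ^ 2 := by linear_combination (-4 * X * (1 + X)) * hA
  have hWW' : 2 * W * W' = -2 - 6 * X := by
    have h := congrArg (d⁄dX K) hW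
    simp only [W, Derivation.leibniz_pow, Derivation.leibniz, map_add, map_sub, h2, h3,
      derivative_X, Derivation.map_one_eq_zero, smul_eq_mul, nsmul_eq_mul, Nat.cast_ofNat] at h
    linear_combination h
  -- `(1 - 2X - 3X²) W' + (1 + 3X) W = W (W W' + 1 + 3X) = 0` is `-2 (1 + X)` times the claim.
  have h4 : 4 * (1 + X) *
      (X * (1 - 2 * X - 3 * X ^ 2) * d⁄dX K A + (1 - 3 * X ^ 2) * A - 1) = 0 := by
    linear_combination (2 * W') * hW - W * hWW'
  have hne : (4 * (1 + X) : K⟦X⟧) ≠ 0 := fun h => by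
    simpa [map_ofNat] using congrArg constantCoeff h
  exact sub_eq_zero.1 ((mul_eq_zero.1 h4).resolve_left hne)

theorem riordan_recurrence_of_convolution (a : ℕ → K) (h0 : a 0 = 1) (h1 : a 1 = 0)
    (h : ∀ n, a (n + 2) = ∑ i ∈ range (n + 1), a i * (a (n - i) + a (n + 1 - i))) (n : ℕ) :
    (n + 4) * a (n + 3) = (2 * n + 4) * a (n + 2) + (3 * n + 6) * a (n + 1) := by
  have hode := congrArg (coeff (n + 3))
    (riordan_ode_of_quadratic (one_add_X_mul_mk_of_convolution a h0 h1 h))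
  have hexp : X * (1 - 2 * X - 3 * X ^ 2) * d⁄dX K (mk a) + (1 - 3 * X ^ 2) * mk a =
      mk a + X * d⁄dX K (mk a) - X * (X * (2 • d⁄dX K (mk a) + 3 • mk a)) -
        X * (X * (X * (3 • d⁄dX K (mk a)))) := by
    simp only [nsmul_eq_mul, Nat.cast_ofNat]
    ring
  rw [hexp] at hode
  simp only [map_add, map_sub, coeff_succ_X_mul, map_nsmul, coeff_derivative, coeff_mk, coeff_one,
    Nat.add_eq_zero_iff, OfNat.ofNat_ne_zero, and_false, if_false] at hode
  push_cast at hode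
  linear_combination hode

end PowerSeries

theorem riordanCount_zero : riordanCount 0 = 1 := by
  have := card_riordanPartitions (∅ : Finset ℕ)
  rwa [card_empty, riordanPartitions_empty, card_singleton, eq_comm] at this

theorem riordanCount_one : riordanCount 1 = 0 := by
  have := card_riordanPartitions ({0} : Finset ℕ)
  rwa [card_singleton, riordanPartitions_singleton, card_empty, eq_comm] at this

theorem riordanCount_two : riordanCount 2 = 1 := by
  simp [riordanCount_add_two 0, riordanCount_zero, riordanCount_one]

theorem riordanCount_three : riordanCount 3 = 1 := by
  simp [riordanCount_add_two 1, sum_range_succ, riordanCount_zero, riordanCount_one,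
    riordanCount_two]

theorem riordanCount_recurrence {n : ℕ} (hn : 4 ≤ n) :
    (n + 1) * riordanCount n =
      (n - 1) * (2 * riordanCount (n - 1) + 3 * riordanCount (n - 2)) := by
  obtain ⟨m, rfl⟩ : ∃ m, n = m + 4 := ⟨n - 4, by omega⟩
  have h := PowerSeries.riordan_recurrence_of_convolution (K := ℚ) (riordanCount ·)
    (by simp [riordanCount_zero]) (by simp [riordanCount_one])
    (fun n => by simp [riordanCount_add_two]) (m + 1)
  rw [show m + 4 - 1 = m + 3 by omega, show m + 4 - 2 = m + 2 by omega]
  have hq : ((m + 4 + 1 : ℕ) * riordanCount (m + 4) : ℚ) =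
      (m + 3 : ℕ) * (2 * riordanCount (m + 3) + 3 * riordanCount (m + 2)) := by
    push_cast at h ⊢
    linear_combination h
  exact_mod_cast hq

theorem isRiordanPartition_iff {n : ℕ} {P : Finset (Finset (Fin n))} :
    IsRiordanPartition n P ↔ IsRiordanOn univ P := by
  constructor
  · rintro ⟨⟨hcov, hcard⟩, hnc⟩
    exact ⟨fun B _ => subset_univ B, fun x _ => (hcov x).exists,
      fun x B hB C hC hxB hxC => (hcov x).unique ⟨hB, hxB⟩ ⟨hC, hxC⟩, hcard,
      fun B hB C hC hBC ⟨i, j, k, l, hij, hjk, hkl, hi, hk, hj, hl⟩ =>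
        hnc ⟨i, j, k, l, hij, hjk, hkl, B, hB, C, hC, hBC, hi, hk, hj, hl⟩⟩
  · intro h
    refine ⟨⟨fun x => ?_, h.two_le_card⟩, ?_⟩
    · obtain ⟨B, hB, hxB⟩ := h.exists_mem x (mem_univ x)
      exact ⟨B, ⟨hB, hxB⟩, fun C hC => h.eq_of_mem x C hC.1 B hB hC.2 hxB⟩
    · rintro ⟨i, j, k, l, hij, hjk, hkl, B, hB, C, hC, hBC, hi, hk, hj, hl⟩
      exact h.not_crosses B hB C hC hBC ⟨i, j, k, l, hij, hjk, hkl, hi, hk, hj, hl⟩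

theorem natCard_isRiordanPartition (n : ℕ) :
    Nat.card {P : Finset (Finset (Fin n)) // IsRiordanPartition n P} = riordanCount n := by
  simp_rw [isRiordanPartition_iff, ← mem_riordanPartitions]
  exact Nat.card_eq_finsetCard _

theorem card_riordan_partitions
    (R : ℕ → ℕ) (hR2 : R 2 = 1) (hR3 : R 3 = 1)
    (hRrec : ∀ n, 4 ≤ n → (n + 1) * R n = (n - 1) * (2 * R (n - 1) + 3 * R (n - 2))) :
    ∀ n, 2 ≤ n →
      Nat.card {P : Finset (Finset (Fin n)) // IsRiordanPartition n P} = R n := by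
  intro n hn
  rw [natCard_isRiordanPartition]
  induction n using Nat.strong_induction_on with
  | _ n ih =>
    rcases (by omega : n = 2 ∨ n = 3 ∨ 4 ≤ n) with rfl | rfl | h4
    · rw [riordanCount_two, hR2]
    · rw [riordanCount_three, hR3]
    · have h := hRrec n h4
      rw [← ih (n - 1) (by omega) (by omega), ← ih (n - 2) (by omega) (by omega),
        ← riordanCount_recurrence h4] at h
      exact (Nat.eq_of_mul_eq_mul_left (Nat.succ_pos n) h).symm
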